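/- arXiv:2105.09389 — 11 statements merged into one kernel-verified Lean document; each statement's English description precedes it below -/
import Mathlib

section
/- For every finite nonempty set S, every q : S → ℝ with q s ≥ 0 for all s ∈ S, every μ : S → ℝ with μ s > 0 for all s ∈ S, and every real number a > 0, there exists a unique real number L such that ∑_{s∈S} max(0, μ s · L − q s) = a. Moreover, this L satisfies L > min_{s∈S} (q s)/(μ s). -/
open Finset

/-- **Existence, uniqueness and lower bound for the ideal workload (IWL).**
For a finite nonempty set of servers `S`, nonnegative queue lengths `q`, positive
service rates `μ`, and positive total work `a`, there is a unique real `L` with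
`∑ s, max 0 (μ s * L - q s) = a`, and any such `L` is strictly above the minimal
normalized queue length `min_s (q s / μ s)`. -/
theorem iwl_exists_unique {S : Type*} [Fintype S] [Nonempty S]
    (q μ : S → ℝ) (hq : ∀ s, 0 ≤ q s) (hμ : ∀ s, 0 < μ s)
    (a : ℝ) (ha : 0 < a) :
    (∃! L : ℝ, ∑ s, max 0 (μ s * L - q s) = a) ∧
      (∀ L : ℝ, (∑ s, max 0 (μ s * L - q s) = a) →
        Finset.univ.inf' Finset.univ_nonempty (fun s => q s / μ s) < L) := by
  set f : ℝ → ℝ := fun L => ∑ s, max 0 (μ s * L - q s) with hf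
  set m : ℝ := Finset.univ.inf' Finset.univ_nonempty (fun s => q s / μ s) with hm
  obtain ⟨s₀, -, hs₀⟩ := Finset.exists_mem_eq_inf' Finset.univ_nonempty (fun s => q s / μ s)
  -- f L = 0 for L ≤ m
  have hzero : ∀ L ≤ m, f L = 0 := by
    intro L hL
    refine Finset.sum_eq_zero fun s _ => ?_
    have h1 : L ≤ q s / μ s := le_trans hL (Finset.inf'_le _ (Finset.mem_univ s))
    have : μ s * L ≤ q s := by
      rw [mul_comm]
      exact (le_div_iff₀ (hμ s)).mp h1
    simp [max_eq_left, sub_nonpos.mpr this]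
  have hmval : m = q s₀ / μ s₀ := hs₀
  have hms₀ : μ s₀ * m = q s₀ := by
    rw [hmval, mul_div_cancel₀ _ (hμ s₀).ne']
  -- strict mono on Ici m
  have hstrict : StrictMonoOn f (Set.Ici m) := by
    intro x hx y hy hxy
    apply Finset.sum_lt_sum
    · intro s _
      exact max_le_max le_rfl (by nlinarith [hμ s, hxy.le])
    · refine ⟨s₀, Finset.mem_univ s₀, ?_⟩
      have hy' : 0 < μ s₀ * y - q s₀ := by
        have : m < y := lt_of_le_of_lt hx hxy
        nlinarith [hμ s₀]
      have hxy' : μ s₀ * x - q s₀ < μ s₀ * y - q s₀ := by nlinarith [hμ s₀]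
      rw [max_eq_right hy'.le]
      exact max_lt hy' hxy'
  -- any solution is > m
  have hgt : ∀ L, f L = a → m < L := by
    intro L hL
    by_contra h
    push_neg at h
    rw [hzero L h] at hL
    linarith
  -- existence via IVT
  have hcont : Continuous f := by
    apply continuous_finset_sum
    intro s _
    exact continuous_const.max (by continuity)
  set L₁ : ℝ := m + a / μ s₀ with hL₁
  have hmL₁ : m ≤ L₁ := by
    have h₂ : 0 < a / μ s₀ := div_pos ha (hμ s₀)
    rw [hL₁]; linarith
  have hfL₁ : a ≤ f L₁ := by
    have h1 : max 0 (μ s₀ * L₁ - q s₀) = a := by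
      have : μ s₀ * L₁ - q s₀ = a := by
        rw [hL₁, mul_add, hms₀, mul_div_cancel₀ _ (hμ s₀).ne']
        ring
      rw [this, max_eq_right ha.le]
    calc a = max 0 (μ s₀ * L₁ - q s₀) := h1.symm
    _ ≤ ∑ s, max 0 (μ s * L₁ - q s) :=
        Finset.single_le_sum (f := fun s => max 0 (μ s * L₁ - q s))
          (fun s _ => le_max_left _ _) (Finset.mem_univ s₀)
    _ = f L₁ := rfl
  have hfm : f m = 0 := hzero m le_rfl
  have hex : ∃ L ∈ Set.Icc m L₁, f L = a := by
    have := intermediate_value_Icc hmL₁ (hcont.continuousOn)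
    have ha' : a ∈ Set.Icc (f m) (f L₁) := ⟨by rw [hfm]; exact ha.le, hfL₁⟩
    obtain ⟨L, hL, hLa⟩ := this ha'
    exact ⟨L, hL, hLa⟩
  obtain ⟨L, hLmem, hLa⟩ := hex
  refine ⟨⟨L, hLa, fun y hy => ?_⟩, hgt⟩
  exact hstrict.injOn (Set.mem_Ici.mpr (hgt y hy).le)
    (Set.mem_Ici.mpr (hgt L hLa).le) (by rw [show f y = a from hy, hLa])
end

section
/- Let S be a finite nonempty set, q : S → ℝ with q s ≥ 0, μ : S → ℝ with μ s > 0, a > 0 a real number, and let L be a real number satisfying ∑_{s∈S} max(0, μ s · L − q s) = a. Define ā : S → ℝ by ā s = max(0, μ s · L − q s). Then: (i) ā s ≥ 0 for all s and ∑_{s∈S} ā s = a; (ii) min_{s∈S} (q s + ā s)/(μ s) = L; and (iii) for every b : S → ℝ with b s ≥ 0 for all s and ∑_{s∈S} b s = a, one has min_{s∈S} (q s + b s)/(μ s) ≤ L. Hence ā maximizes the minimum load min_{s∈S} (q s + b s)/(μ s) over all feasible assignments b, and the optimal value equals L. -/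
open Finset

/-- **The IBA maximizes the minimum load.**
Let `L` satisfy `∑ s, max 0 (μ s * L - q s) = a` (the ideal workload) and let
`ā s = max 0 (μ s * L - q s)` (the ideally balanced assignment). Then `ā` is a
feasible assignment, its minimum load equals `L`, and every feasible assignment `b`
has minimum load at most `L`. -/
theorem iba_maximizes_min_load {S : Type*} [Fintype S] [Nonempty S]
    (q μ : S → ℝ) (hq : ∀ s, 0 ≤ q s) (hμ : ∀ s, 0 < μ s)
    (a : ℝ) (ha : 0 < a)
    (L : ℝ) (hL : ∑ s, max 0 (μ s * L - q s) = a) :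
    ((∀ s, 0 ≤ max 0 (μ s * L - q s)) ∧ ∑ s, max 0 (μ s * L - q s) = a) ∧
    (Finset.univ.inf' Finset.univ_nonempty
        (fun s => (q s + max 0 (μ s * L - q s)) / μ s) = L) ∧
    (∀ b : S → ℝ, (∀ s, 0 ≤ b s) → (∑ s, b s = a) →
      Finset.univ.inf' Finset.univ_nonempty (fun s => (q s + b s) / μ s) ≤ L) := by
  have hex : ∃ s : S, 0 < μ s * L - q s := by
    by_contra h
    push_neg at h
    have h0 : ∑ s, max 0 (μ s * L - q s) = 0 :=
      Finset.sum_eq_zero (fun s _ => max_eq_left (h s))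
    linarith
  obtain ⟨s₀, hs₀⟩ := hex
  refine ⟨⟨fun s => le_max_left _ _, hL⟩, ?_, ?_⟩
  · apply le_antisymm
    · apply Finset.inf'_le_of_le _ (Finset.mem_univ s₀)
      rw [max_eq_right hs₀.le, div_le_iff₀ (hμ s₀)]
      nlinarith
    · apply Finset.le_inf'
      intro s _
      rcases le_or_gt 0 (μ s * L - q s) with h | h
      · rw [max_eq_right h, le_div_iff₀ (hμ s)]
        nlinarith
      · rw [max_eq_left h.le, le_div_iff₀ (hμ s)]
        nlinarith
  · intro b hb hsum
    by_contra hcon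
    push_neg at hcon
    have hlt : ∀ s, μ s * L < q s + b s := by
      intro s
      have h1 : Finset.univ.inf' Finset.univ_nonempty (fun s => (q s + b s) / μ s)
          ≤ (q s + b s) / μ s := Finset.inf'_le _ (Finset.mem_univ s)
      have h2 : L < (q s + b s) / μ s := lt_of_lt_of_le hcon h1
      have h3 := (lt_div_iff₀ (hμ s)).mp h2
      nlinarith
    have key : ∀ s ∈ Finset.univ, max 0 (μ s * L - q s) ≤ b s := fun s _ =>
      max_le (hb s) (by linarith [hlt s])
    have keys₀ : max 0 (μ s₀ * L - q s₀) < b s₀ := by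
      rw [max_eq_right hs₀.le]; linarith [hlt s₀]
    have : a < a := by
      calc a = ∑ s, max 0 (μ s * L - q s) := hL.symm
        _ < ∑ s, b s := Finset.sum_lt_sum key ⟨s₀, Finset.mem_univ s₀, keys₀⟩
        _ = a := hsum
    exact lt_irrefl a this
end

section
/- Let S be a finite nonempty set, q : S → ℝ with q s ≥ 0, μ : S → ℝ with μ s > 0, L a real number, a ≥ 1 a natural number, and P a probability mass function on S (i.e., P s ≥ 0 for all s and ∑_{s∈S} P s = 1). Let X₁, …, X_a be independent S-valued random variables, each distributed according to P (i.e., a random element of S^a drawn from the a-fold product of the measure P), and for each s ∈ S let ā s be the number of indices k ∈ {1,…,a} with X_k = s. Then the expected error satisfies E[ ∑_{s∈S} (q s + ā s − μ s·L)²/(μ s) ] = a(a−1)·∑_{s∈S} (P s)²/(μ s) + a·∑_{s∈S} ((2(q s − μ s·L) + 1)/(μ s))·(P s) + ∑_{s∈S} (q s − μ s·L)²/(μ s). -/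
open Finset

lemma iid_sum_prod {S : Type*} [Fintype S] [DecidableEq S] {a : ℕ} (g : Fin a → S → ℝ) :
    ∑ x : Fin a → S, ∏ j, g j (x j) = ∏ j, ∑ t, g j t := by
  rw [Finset.prod_univ_sum, Fintype.piFinset_univ]

lemma iid_moment {S : Type*} [Fintype S] [DecidableEq S]
    (P : S → ℝ) (hP1 : ∑ s, P s = 1) {a : ℕ} (T : Finset (Fin a)) (s : S) :
    ∑ x : Fin a → S, (∏ j, P (x j)) * ∏ j ∈ T, (if x j = s then (1:ℝ) else 0)
      = P s ^ T.card := by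
  set g : Fin a → S → ℝ := fun j t => if j ∈ T then (if t = s then P t else 0) else P t with hg
  have key : ∀ x : Fin a → S,
      (∏ j, P (x j)) * ∏ j ∈ T, (if x j = s then (1:ℝ) else 0) = ∏ j, g j (x j) := by
    intro x
    have hT : ∏ j ∈ T, g j (x j) = (∏ j ∈ T, P (x j)) * ∏ j ∈ T, (if x j = s then (1:ℝ) else 0) := by
      rw [← Finset.prod_mul_distrib]
      refine Finset.prod_congr rfl fun j hj => ?_
      by_cases h : x j = s <;> simp [hg, hj, h]
    have hTc : ∏ j ∈ Tᶜ, g j (x j) = ∏ j ∈ Tᶜ, P (x j) := by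
      refine Finset.prod_congr rfl fun j hj => ?_
      simp only [hg]
      rw [if_neg (by simpa using hj)]
    rw [← Finset.prod_mul_prod_compl T (fun j => g j (x j)), hT, hTc,
        ← Finset.prod_mul_prod_compl T (fun j => P (x j))]
    ring
  simp_rw [key]
  rw [iid_sum_prod]
  have h2 : ∀ j : Fin a, (∑ t, g j t) = if j ∈ T then P s else 1 := by
    intro j
    by_cases h : j ∈ T <;> simp [hg, h, hP1, Finset.sum_ite_eq']
  simp_rw [h2]
  rw [Finset.prod_ite_mem, Finset.univ_inter, Finset.prod_const]

/-- **Expected error of i.i.d. random dispatching.**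
`a ≥ 1` jobs are each independently sent to a random server drawn from the
distribution `P` on the finite set `S`.  The expectation over the `a`-fold product
measure (a random element `x : Fin a → S`, with weight `∏ k, P (x k)`) of the error
`∑ s, (q s + ā s - μ s * L)^2 / μ s`, where `ā s = #{k : x k = s}`, equals
`a(a-1) ∑ s (P s)²/μ s + a ∑ s ((2(q s - μ s L)+1)/μ s) P s + ∑ s (q s - μ s L)²/μ s`. -/
theorem expected_error_iid_dispatch {S : Type*} [Fintype S] [DecidableEq S] [Nonempty S]
    (q μ : S → ℝ) (hq : ∀ s, 0 ≤ q s) (hμ : ∀ s, 0 < μ s)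
    (L : ℝ) (a : ℕ) (ha : 1 ≤ a)
    (P : S → ℝ) (hP0 : ∀ s, 0 ≤ P s) (hP1 : ∑ s, P s = 1) :
    ∑ x : Fin a → S, (∏ k, P (x k)) *
        (∑ s, (q s + ((Finset.univ.filter (fun k => x k = s)).card : ℝ) - μ s * L) ^ 2 / μ s)
      = (a : ℝ) * ((a : ℝ) - 1) * ∑ s, (P s) ^ 2 / μ s
        + (a : ℝ) * ∑ s, ((2 * (q s - μ s * L) + 1) / μ s) * P s
        + ∑ s, (q s - μ s * L) ^ 2 / μ s := by
  -- indicator notation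
  set ind : (Fin a → S) → S → Fin a → ℝ :=
    fun x s k => if x k = s then (1:ℝ) else 0 with hind
  have hN : ∀ (x : Fin a → S) (s : S),
      ((Finset.univ.filter (fun k => x k = s)).card : ℝ) = ∑ k, ind x s k := by
    intro x s
    rw [Finset.card_filter]
    push_cast
    simp [hind]
  -- basic expectations
  have hE0 : ∑ x : Fin a → S, ∏ k, P (x k) = 1 := by
    have := iid_sum_prod (fun (_ : Fin a) (t : S) => P t)
    simpa [hP1] using this
  have hE1 : ∀ (s : S) (k : Fin a),
      ∑ x : Fin a → S, (∏ j, P (x j)) * ind x s k = P s := by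
    intro s k
    have := iid_moment P hP1 ({k} : Finset (Fin a)) s
    simpa [hind] using this
  have hE2 : ∀ (s : S) (k l : Fin a),
      ∑ x : Fin a → S, (∏ j, P (x j)) * (ind x s k * ind x s l)
        = if l = k then P s else P s ^ 2 := by
    intro s k l
    by_cases hkl : l = k
    · subst hkl
      have hsq : ∀ x : Fin a → S, ind x s l * ind x s l = ind x s l := by
        intro x; simp only [hind]; split <;> ring
      simp_rw [hsq]
      simp [hE1 s l]
    · have := iid_moment P hP1 ({k, l} : Finset (Fin a)) s
      simp only [Finset.prod_pair (show k ≠ l from fun h => hkl h.symm)] at this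
      rw [Finset.card_insert_of_notMem (by simp only [Finset.mem_singleton]; exact fun h => hkl h.symm),
          Finset.card_singleton] at this
      simpa [hind, hkl] using this
  -- first moment of the count
  have hM1 : ∀ s : S, ∑ x : Fin a → S, (∏ j, P (x j)) * (∑ k, ind x s k) = (a : ℝ) * P s := by
    intro s
    simp_rw [Finset.mul_sum]
    rw [Finset.sum_comm]
    simp [hE1 s]
  -- second moment of the count
  have hM2 : ∀ s : S, ∑ x : Fin a → S, (∏ j, P (x j)) * (∑ k, ind x s k) ^ 2
      = (a : ℝ) * P s + (a : ℝ) * ((a : ℝ) - 1) * P s ^ 2 := by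
    intro s
    have hsq : ∀ x : Fin a → S, (∑ k, ind x s k) ^ 2 = ∑ k, ∑ l, ind x s k * ind x s l := by
      intro x
      rw [sq, Finset.sum_mul_sum]
    simp_rw [hsq, Finset.mul_sum]
    rw [Finset.sum_comm]
    have : ∀ k : Fin a, ∑ x : Fin a → S, ∑ l, (∏ j, P (x j)) * (ind x s k * ind x s l)
        = P s + ((a : ℝ) - 1) * P s ^ 2 := by
      intro k
      rw [Finset.sum_comm]
      have h1 : ∀ l : Fin a, ∑ x : Fin a → S, (∏ j, P (x j)) * (ind x s k * ind x s l)
          = P s ^ 2 + (if l = k then P s - P s ^ 2 else 0) := by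
        intro l
        rw [hE2 s k l]
        split <;> ring
      simp_rw [h1]
      rw [Finset.sum_add_distrib, Finset.sum_const, Finset.sum_ite_eq' univ k]
      simp only [Finset.mem_univ, if_pos, Finset.card_univ, Fintype.card_fin, nsmul_eq_mul]
      ring
    simp_rw [this]
    rw [Finset.sum_const, Finset.card_univ, Fintype.card_fin, nsmul_eq_mul]
    ring
  -- per-server expectation of the squared error
  have hEs : ∀ s : S,
      ∑ x : Fin a → S, (∏ k, P (x k)) * ((q s + (∑ k, ind x s k) - μ s * L) ^ 2 / μ s)
        = ((q s - μ s * L) ^ 2 + 2 * (q s - μ s * L) * ((a : ℝ) * P s)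
            + ((a : ℝ) * P s + (a : ℝ) * ((a : ℝ) - 1) * P s ^ 2)) / μ s := by
    intro s
    have expand : ∀ x : Fin a → S,
        (∏ k, P (x k)) * ((q s + (∑ k, ind x s k) - μ s * L) ^ 2 / μ s)
          = ((∏ k, P (x k)) * (q s - μ s * L) ^ 2
              + 2 * (q s - μ s * L) * ((∏ k, P (x k)) * (∑ k, ind x s k))
              + (∏ k, P (x k)) * (∑ k, ind x s k) ^ 2) / μ s := by
      intro x; ring
    simp_rw [expand]
    rw [← Finset.sum_div, Finset.sum_add_distrib, Finset.sum_add_distrib,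
        ← Finset.sum_mul, ← Finset.mul_sum, hE0, hM1 s, hM2 s, one_mul]
  -- assemble
  simp_rw [hN, Finset.mul_sum]
  rw [Finset.sum_comm]
  simp_rw [hEs]
  rw [← Finset.sum_add_distrib, ← Finset.sum_add_distrib]
  refine Finset.sum_congr rfl fun s _ => ?_
  field_simp
  ring
end

section
/- Let S be a finite nonempty set, q : S → ℝ with q s ≥ 0, μ : S → ℝ with μ s > 0, L a real number, a a natural number with a ≥ 2, and let P* ∈ Δ be a minimizer of f over the probability simplex Δ. If r, u ∈ S satisfy P* r > 0 and (2·q r + 1)/(μ r) ≥ (2·q u + 1)/(μ u), then P* u > 0. -/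
open Finset

/-- The SCD objective function
`f(P) = (a-1) ∑ s (P s)²/μ s + ∑ s ((2(q s - μ s L)+1)/μ s) · P s`. -/
noncomputable def scdObjective {S : Type*} [Fintype S]
    (q μ : S → ℝ) (L : ℝ) (a : ℕ) (P : S → ℝ) : ℝ :=
  ((a : ℝ) - 1) * ∑ s, (P s) ^ 2 / μ s
    + ∑ s, ((2 * (q s - μ s * L) + 1) / μ s) * P s

/-- **Ordering lemma (Lemma 1).**
If `P*` minimizes `f` over the probability simplex, `P* r > 0`, and
`(2 q r + 1)/μ r ≥ (2 q u + 1)/μ u`, then `P* u > 0`. -/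
theorem scd_ordering_lemma {S : Type*} [Fintype S] [Nonempty S]
    (q μ : S → ℝ) (hq : ∀ s, 0 ≤ q s) (hμ : ∀ s, 0 < μ s)
    (L : ℝ) (a : ℕ) (ha : 2 ≤ a)
    (Pstar : S → ℝ)
    (hPΔ : (∀ s, 0 ≤ Pstar s) ∧ ∑ s, Pstar s = 1)
    (hPmin : ∀ Q : S → ℝ, ((∀ s, 0 ≤ Q s) ∧ ∑ s, Q s = 1) →
        scdObjective q μ L a Pstar ≤ scdObjective q μ L a Q)
    (r u : S) (hr : 0 < Pstar r)
    (hkey : (2 * q u + 1) / μ u ≤ (2 * q r + 1) / μ r) :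
    0 < Pstar u := by
  classical
  by_cases hur : u = r
  · exact hur ▸ hr
  by_contra hcon
  have hPu : Pstar u = 0 := le_antisymm (not_lt.mp hcon) (hPΔ.1 u)
  have hμu := hμ u
  have hμr := hμ r
  have ha1 : (0:ℝ) < (a:ℝ) - 1 := by
    have : (2:ℝ) ≤ (a:ℝ) := by exact_mod_cast ha
    linarith
  set cu : ℝ := (2 * (q u - μ u * L) + 1) / μ u with hcu
  set cr : ℝ := (2 * (q r - μ r * L) + 1) / μ r with hcr
  have hcu' : cu = (2 * q u + 1) / μ u - 2 * L := by
    rw [hcu]; field_simp; ring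
  have hcr' : cr = (2 * q r + 1) / μ r - 2 * L := by
    rw [hcr]; field_simp; ring
  have hcru : cu ≤ cr := by rw [hcu', hcr']; linarith
  set A : ℝ := ((a:ℝ) - 1) * (1 / μ u + 1 / μ r) with hA
  set B : ℝ := 2 * ((a:ℝ) - 1) * Pstar r / μ r + (cr - cu) with hB
  have hApos : 0 < A := by
    have : 0 < 1 / μ u + 1 / μ r := by positivity
    exact mul_pos ha1 this
  have hBpos : 0 < B := by
    have : 0 < 2 * ((a:ℝ) - 1) * Pstar r / μ r := by positivity
    rw [hB]; linarith
  set ε : ℝ := min (Pstar r) (B / (2 * A)) with hε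
  have hεpos : 0 < ε := lt_min hr (by positivity)
  have hεr : ε ≤ Pstar r := min_le_left _ _
  have h1 : ε ≤ B / (2 * A) := min_le_right _ _
  clear_value cu cr A B ε
  have hεB : A * ε < B := by
    have h2 : A * ε ≤ A * (B / (2 * A)) :=
      mul_le_mul_of_nonneg_left h1 hApos.le
    have h3 : A * (B / (2 * A)) = B / 2 := by
      field_simp
    linarith
  set Q : S → ℝ := fun s =>
    Pstar s + ε * ((if s = u then (1:ℝ) else 0) - (if s = r then (1:ℝ) else 0)) with hQ
  have hQΔ : (∀ s, 0 ≤ Q s) ∧ ∑ s, Q s = 1 := by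
    constructor
    · intro s
      have hQs : Q s = Pstar s + ε * ((if s = u then (1:ℝ) else 0) - (if s = r then (1:ℝ) else 0)) := rfl
      rw [hQs]
      by_cases h1 : s = u
      · subst h1
        rw [if_pos rfl, if_neg hur, hPu]
        norm_num; linarith
      · by_cases h2 : s = r
        · subst h2
          rw [if_neg h1, if_pos rfl]
          norm_num; linarith
        · rw [if_neg h1, if_neg h2]
          have := hPΔ.1 s; norm_num; linarith
    · simp [hQ, Finset.sum_add_distrib, hPΔ.2, mul_sub, mul_ite,
        Finset.sum_sub_distrib, Finset.sum_ite_eq']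
  have hkey1 : ∀ s, (Q s)^2 / μ s = (Pstar s)^2 / μ s +
      ((if s = u then (2*ε*Pstar u + ε^2) / μ u else 0)
        + (if s = r then (-(2*ε*Pstar r) + ε^2) / μ r else 0)) := by
    intro s
    by_cases h1 : s = u
    · subst h1; simp [hQ, hur]; ring
    · by_cases h2 : s = r
      · subst h2; simp [hQ, h1]; ring
      · simp [hQ, h1, h2]
  have hkey2 : ∀ s, ((2 * (q s - μ s * L) + 1) / μ s) * Q s =
      ((2 * (q s - μ s * L) + 1) / μ s) * Pstar s +
      ((if s = u then cu * ε else 0) + (if s = r then -(cr * ε) else 0)) := by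
    intro s
    by_cases h1 : s = u
    · subst h1; simp [hQ, hur, hcu]; ring
    · by_cases h2 : s = r
      · subst h2; simp [hQ, h1, hcr]; ring
      · simp [hQ, h1, h2]
  have hobj : scdObjective q μ L a Q = scdObjective q μ L a Pstar + (A * ε^2 - B * ε) := by
    unfold scdObjective
    rw [Finset.sum_congr rfl (fun s _ => hkey1 s), Finset.sum_congr rfl (fun s _ => hkey2 s)]
    simp only [Finset.sum_add_distrib, Finset.sum_ite_eq', Finset.mem_univ, if_true]
    rw [hA, hB, hPu]
    ring
  have hlt : scdObjective q μ L a Q < scdObjective q μ L a Pstar := by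
    have : A * ε^2 - B * ε < 0 := by nlinarith
    linarith [hobj]
  exact absurd (hPmin Q hQΔ) (not_le.mpr hlt)
end

section
/- Let S be a finite nonempty set with n elements, q : S → ℝ with q s ≥ 0, μ : S → ℝ with μ s > 0, L a real number, a a natural number with a ≥ 2, and let P* ∈ Δ be a minimizer of f over the probability simplex Δ; set S⁺ = {s ∈ S : P* s > 0}. Then for every bijective enumeration s₁, s₂, …, s_n of S such that the sequence (2·q s_i + 1)/(μ s_i) is nondecreasing in i, there exists j with 1 ≤ j ≤ n such that S⁺ = {s₁, …, s_j}. -/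
open Finset

lemma scd_support_mono {S : Type*} [Fintype S]
    (q μ : S → ℝ) (hμ : ∀ s, 0 < μ s) (L : ℝ) (a : ℕ) (ha : 2 ≤ a)
    (P : S → ℝ) (hP0 : ∀ s, 0 ≤ P s) (hP1 : ∑ s, P s = 1)
    (hmin : ∀ Q : S → ℝ, ((∀ s, 0 ≤ Q s) ∧ ∑ s, Q s = 1) →
        scdObjective q μ L a P ≤ scdObjective q μ L a Q)
    {s t : S} (hkey : (2 * q s + 1) / μ s ≤ (2 * q t + 1) / μ t)
    (ht : 0 < P t) : 0 < P s := by
  classical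
  by_contra hs
  have hs0 : P s = 0 := le_antisymm (not_lt.mp hs) (hP0 s)
  have hst : s ≠ t := by
    intro h; rw [h] at hs0; rw [hs0] at ht; exact lt_irrefl 0 ht
  have hμs := hμ s
  have hμt := hμ t
  set A : ℝ := 1 / μ s + 1 / μ t with hA
  have hApos : 0 < A := by positivity
  set ε : ℝ := min (P t) (P t / (μ t * A)) with hε
  have hεpos : 0 < ε := lt_min ht (by positivity)
  have hεPt : ε ≤ P t := min_le_left _ _
  have hεA : ε * A ≤ P t / μ t := by
    have h2 : ε ≤ P t / (μ t * A) := min_le_right _ _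
    have := mul_le_mul_of_nonneg_right h2 hApos.le
    calc ε * A ≤ P t / (μ t * A) * A := this
    _ = P t / μ t := by field_simp
  set Q : S → ℝ := fun x => P x + (if x = s then ε else 0) - (if x = t then ε else 0) with hQ
  have hQ0 : ∀ x, 0 ≤ Q x := by
    intro x
    by_cases hxs : x = s
    · subst hxs
      simp [hQ, hst, hs0]
      exact hεpos.le
    · by_cases hxt : x = t
      · subst hxt
        simp [hQ, hxs]
        linarith
      · simp [hQ, hxs, hxt]
        exact hP0 x
  have hQ1 : ∑ x, Q x = 1 := by
    simp [hQ, Finset.sum_add_distrib, Finset.sum_sub_distrib, hP1]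
  have hle := hmin Q ⟨hQ0, hQ1⟩
  -- compute the quadratic sum difference
  set c : S → ℝ := fun x => (2 * (q x - μ x * L) + 1) / μ x with hc
  have hpair : ∀ g : S → ℝ, (∀ x, x ≠ s → x ≠ t → g x = 0) →
      ∑ x, g x = g s + g t := by
    intro g hg
    rw [← Finset.sum_subset (Finset.subset_univ ({s,t} : Finset S))
      (by intro x _ hx; simp at hx; exact hg x hx.1 hx.2)]
    exact Finset.sum_pair hst
  have hquad : ∑ x, (Q x) ^ 2 / μ x
      = (∑ x, (P x) ^ 2 / μ x) + (ε ^ 2 / μ s + (ε ^ 2 - 2 * ε * P t) / μ t) := by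
    have h1 : ∑ x, ((Q x) ^ 2 / μ x - (P x) ^ 2 / μ x)
        = ε ^ 2 / μ s + (ε ^ 2 - 2 * ε * P t) / μ t := by
      rw [hpair _ (by intro x hxs hxt; simp [hQ, hxs, hxt])]
      have hQs : Q s = ε := by simp [hQ, hst, hs0]
      have hQt : Q t = P t - ε := by simp [hQ, Ne.symm hst]
      rw [hQs, hQt, hs0]
      ring
    rw [Finset.sum_sub_distrib] at h1
    linarith
  have hlin : ∑ x, c x * Q x = (∑ x, c x * P x) + (ε * c s - ε * c t) := by
    have h1 : ∑ x, (c x * Q x - c x * P x) = ε * c s - ε * c t := by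
      rw [hpair _ (by intro x hxs hxt; simp [hQ, hxs, hxt])]
      have hQs : Q s = ε := by simp [hQ, hst, hs0]
      have hQt : Q t = P t - ε := by simp [hQ, Ne.symm hst]
      rw [hQs, hQt, hs0]
      ring
    rw [Finset.sum_sub_distrib] at h1
    linarith
  have hdiff : scdObjective q μ L a Q - scdObjective q μ L a P
      = ((a : ℝ) - 1) * (ε ^ 2 / μ s + (ε ^ 2 - 2 * ε * P t) / μ t)
        + (ε * c s - ε * c t) := by
    unfold scdObjective
    rw [hquad, hlin]
    ring
  have hcst : c s ≤ c t := by
    have hcs : c s = (2 * q s + 1) / μ s - 2 * L := by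
      rw [hc]; field_simp; ring
    have hct : c t = (2 * q t + 1) / μ t - 2 * L := by
      rw [hc]; field_simp; ring
    rw [hcs, hct]; linarith
  have ha1 : (1 : ℝ) ≤ (a : ℝ) - 1 := by
    have : (2 : ℝ) ≤ (a : ℝ) := by exact_mod_cast ha
    linarith
  -- show the quadratic part is negative
  have hneg : scdObjective q μ L a Q - scdObjective q μ L a P < 0 := by
    rw [hdiff]
    have h1 : ε ^ 2 / μ s + (ε ^ 2 - 2 * ε * P t) / μ t
        = ε * (ε * A - 2 * (P t / μ t)) := by
      rw [hA]; field_simp; ring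
    have h2 : ε * A - 2 * (P t / μ t) < 0 := by
      have : 0 < P t / μ t := by positivity
      linarith
    have h3 : ε * (ε * A - 2 * (P t / μ t)) < 0 :=
      mul_neg_of_pos_of_neg hεpos h2
    have h4 : ((a : ℝ) - 1) * (ε * (ε * A - 2 * (P t / μ t))) < 0 :=
      mul_neg_of_pos_of_neg (by linarith) h3
    have h5 : ε * c s - ε * c t ≤ 0 := by nlinarith
    rw [h1]; linarith
  linarith

/-- **Corollary 1: the probable set is a prefix.**
If `s₁, …, s_n` is a bijective enumeration of `S` that is nondecreasing in the key
`(2 q s + 1)/μ s`, then the probable set `S⁺ = {s | P* s > 0}` of a minimizer `P*`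
of `f` over the simplex equals `{s₁, …, s_j}` for some `1 ≤ j ≤ n`. -/
theorem scd_probable_set_is_prefix {S : Type*} [Fintype S] [Nonempty S]
    (q μ : S → ℝ) (hq : ∀ s, 0 ≤ q s) (hμ : ∀ s, 0 < μ s)
    (L : ℝ) (a : ℕ) (ha : 2 ≤ a)
    (Pstar : S → ℝ)
    (hPΔ : (∀ s, 0 ≤ Pstar s) ∧ ∑ s, Pstar s = 1)
    (hPmin : ∀ Q : S → ℝ, ((∀ s, 0 ≤ Q s) ∧ ∑ s, Q s = 1) →
        scdObjective q μ L a Pstar ≤ scdObjective q μ L a Q)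
    (n : ℕ) (hn : Fintype.card S = n)
    (e : Fin n → S) (he : Function.Bijective e)
    (hmono : Monotone (fun i => (2 * q (e i) + 1) / μ (e i))) :
    ∃ j : ℕ, 1 ≤ j ∧ j ≤ n ∧
      {s : S | 0 < Pstar s} = e '' {i : Fin n | (i : ℕ) < j} := by
  obtain ⟨hP0, hP1⟩ := hPΔ
  have hsupp := fun {s t} hk ht =>
    scd_support_mono q μ hμ L a ha Pstar hP0 hP1 hPmin (s := s) (t := t) hk ht
  set T : Finset (Fin n) := Finset.univ.filter (fun i => 0 < Pstar (e i)) with hT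
  have hdown : ∀ i i' : Fin n, i ≤ i' → i' ∈ T → i ∈ T := by
    intro i i' hii hi'
    simp [hT] at hi' ⊢
    exact hsupp (hmono hii) hi'
  set j : ℕ := T.card with hj
  -- T is nonempty
  have hTne : T.Nonempty := by
    by_contra h
    rw [Finset.not_nonempty_iff_eq_empty] at h
    have hall : ∀ s : S, Pstar s = 0 := by
      intro s
      obtain ⟨i, rfl⟩ := he.2 s
      by_contra hne
      have : 0 < Pstar (e i) := lt_of_le_of_ne (hP0 _) (Ne.symm hne)
      have : i ∈ T := by simp [hT, this]
      simp [h] at this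
    rw [Finset.sum_congr rfl (fun s _ => hall s)] at hP1
    simp at hP1
  have hj1 : 1 ≤ j := Finset.card_pos.mpr hTne
  have hjn : j ≤ n := by
    calc j ≤ Finset.univ.card := Finset.card_le_card (Finset.subset_univ T)
    _ = n := by simp
  refine ⟨j, hj1, hjn, ?_⟩
  -- characterise membership: i ∈ T ↔ i.val < j
  have hchar : ∀ i : Fin n, i ∈ T ↔ (i : ℕ) < j := by
    intro i
    constructor
    · intro hi
      have hsub : Finset.Iic i ⊆ T := by
        intro i' hi'
        exact hdown i' i (Finset.mem_Iic.mp hi') hi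
      have := Finset.card_le_card hsub
      rw [Fin.card_Iic] at this
      omega
    · intro hi
      by_contra hni
      have hsub : T ⊆ Finset.Iio i := by
        intro i' hi'
        rw [Finset.mem_Iio]
        by_contra hge
        exact hni (hdown i i' (not_lt.mp hge) hi')
      have := Finset.card_le_card hsub
      rw [Fin.card_Iio] at this
      omega
  ext s
  obtain ⟨i, rfl⟩ := he.2 s
  simp only [Set.mem_setOf_eq, Set.mem_image]
  constructor
  · intro hpos
    exact ⟨i, (hchar i).mp (by simp [hT, hpos]), rfl⟩
  · rintro ⟨i', hi', hii'⟩
    have : i' ∈ T := (hchar i').mpr hi'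
    simp [hT] at this
    rw [← hii']
    exact this
end

section
/- Let S be a finite nonempty set, q : S → ℝ with q s ≥ 0, μ : S → ℝ with μ s > 0, L a real number, a a natural number with a ≥ 2, and let P* ∈ Δ be a minimizer of f over the probability simplex Δ; set S⁺ = {s ∈ S : P* s > 0} (which is nonempty). Define Λ₀ = ( 2·∑_{s∈S⁺} (μ s·L − q s) − |S⁺| − 2(a−1) ) / ( ∑_{s∈S⁺} μ s ). Then for every s ∈ S⁺: P* s = ( 2·(μ s·L − q s) − 1 − μ s·Λ₀ ) / ( 2(a−1) ). -/
open Finset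

lemma scd_aux_eps (A B δ : ℝ) (hδ : 0 < δ)
    (h : ∀ ε : ℝ, 0 < ε → ε ≤ δ → 0 ≤ ε * A + ε ^ 2 * B) : 0 ≤ A := by
  by_contra hA
  push_neg at hA
  set B' := max B 1 with hB'def
  have hB' : 0 < B' := lt_of_lt_of_le one_pos (le_max_right _ _)
  set ε := min δ (-A / (2 * B')) with hεdef
  have hε0 : 0 < ε := lt_min hδ (div_pos (neg_pos.mpr hA) (by positivity))
  have h1 := h ε hε0 (min_le_left _ _)
  have h2 : ε ≤ -A / (2 * B') := min_le_right _ _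
  have h2' : ε * (2 * B') ≤ -A := (le_div_iff₀ (by positivity)).mp h2
  have h3 : ε * (ε * (2 * B')) ≤ ε * (-A) :=
    mul_le_mul_of_nonneg_left h2' hε0.le
  have h4 : ε ^ 2 * B ≤ ε ^ 2 * B' :=
    mul_le_mul_of_nonneg_left (le_max_left B 1) (sq_nonneg ε)
  nlinarith [mul_pos hε0 (neg_pos.mpr hA)]

/-- **Closed form of an optimal solution on its probable set.**
Let `P*` minimize `f` over the probability simplex, let `S⁺` be its probable set, and
let `Λ₀ = (2 ∑_{s∈S⁺} (μ s L − q s) − |S⁺| − 2(a−1)) / (∑_{s∈S⁺} μ s)`.  Then every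
`s ∈ S⁺` satisfies `P* s = (2(μ s L − q s) − 1 − μ s Λ₀) / (2(a−1))`. -/
theorem scd_closed_form_on_probable_set {S : Type*} [Fintype S] [Nonempty S]
    (q μ : S → ℝ) (hq : ∀ s, 0 ≤ q s) (hμ : ∀ s, 0 < μ s)
    (L : ℝ) (a : ℕ) (ha : 2 ≤ a)
    (Pstar : S → ℝ)
    (hPΔ : (∀ s, 0 ≤ Pstar s) ∧ ∑ s, Pstar s = 1)
    (hPmin : ∀ Q : S → ℝ, ((∀ s, 0 ≤ Q s) ∧ ∑ s, Q s = 1) →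
        scdObjective q μ L a Pstar ≤ scdObjective q μ L a Q)
    (Splus : Finset S) (hSplus : ∀ s, s ∈ Splus ↔ 0 < Pstar s)
    (Λ₀ : ℝ)
    (hΛ₀ : Λ₀ = (2 * ∑ s ∈ Splus, (μ s * L - q s) - (Splus.card : ℝ)
                  - 2 * ((a : ℝ) - 1)) / ∑ s ∈ Splus, μ s) :
    ∀ s ∈ Splus,
      Pstar s = (2 * (μ s * L - q s) - 1 - μ s * Λ₀) / (2 * ((a : ℝ) - 1)) := by
  classical
  obtain ⟨hP0, hPsum⟩ := hPΔ
  have ha1 : (0:ℝ) < (a:ℝ) - 1 := by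
    have : (2:ℝ) ≤ (a:ℝ) := by exact_mod_cast ha
    linarith
  set c : S → ℝ := fun s => (2 * (q s - μ s * L) + 1) / μ s with hc
  set g : S → ℝ := fun s => 2 * ((a:ℝ) - 1) * Pstar s / μ s + c s with hg
  have hobj : ∀ P : S → ℝ,
      scdObjective q μ L a P = ∑ x, (((a:ℝ) - 1) * (P x) ^ 2 / μ x + c x * P x) := by
    intro P
    rw [scdObjective, Finset.sum_add_distrib, Finset.mul_sum]
    congr 1
    exact Finset.sum_congr rfl fun x _ => (mul_div_assoc _ _ _).symm
  -- pair-supported sums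
  have pairsum : ∀ (s t : S), s ≠ t → ∀ F : S → ℝ,
      (∀ x, x ≠ s → x ≠ t → F x = 0) → ∑ x, F x = F s + F t := by
    intro s t hst F hF
    have h1 : ∑ x, F x = ∑ x ∈ ({s, t} : Finset S), F x := by
      refine (Finset.sum_subset (Finset.subset_univ _) ?_).symm
      intro x _ hx
      simp only [Finset.mem_insert, Finset.mem_singleton] at hx
      push_neg at hx
      exact hF x hx.1 hx.2
    rw [h1, Finset.sum_pair hst]
  -- first-order condition
  have perturb : ∀ s ∈ Splus, ∀ t : S, s ≠ t → 0 ≤ g t - g s := by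
    intro s hs t hst
    have hPs : 0 < Pstar s := (hSplus s).mp hs
    refine scd_aux_eps _ (((a:ℝ) - 1) * (1 / μ s + 1 / μ t)) (Pstar s) hPs ?_
    intro ε hε hεle
    set Q : S → ℝ := fun x =>
      if x = s then Pstar s - ε else if x = t then Pstar t + ε else Pstar x with hQ
    have hQs : Q s = Pstar s - ε := by simp [hQ, hst]
    have hQt : Q t = Pstar t + ε := by simp [hQ, hst.symm]
    have hQx : ∀ x, x ≠ s → x ≠ t → Q x = Pstar x := by
      intro x h1 h2; simp [hQ, h1, h2]
    have hQΔ : (∀ x, 0 ≤ Q x) ∧ ∑ x, Q x = 1 := by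
      constructor
      · intro x
        by_cases h1 : x = s
        · rw [h1, hQs]; linarith
        · by_cases h2 : x = t
          · rw [h2, hQt]; have := hP0 t; linarith
          · rw [hQx x h1 h2]; exact hP0 x
      · have hz : ∑ x, (Q x - Pstar x) = 0 := by
          rw [pairsum s t hst _ (fun x h1 h2 => by rw [hQx x h1 h2]; ring),
            hQs, hQt]
          ring
        rw [Finset.sum_sub_distrib, hPsum] at hz
        linarith
    have hmin := hPmin Q hQΔ
    have hdiff : scdObjective q μ L a Q - scdObjective q μ L a Pstar
        = ε * (g t - g s) + ε ^ 2 * (((a:ℝ) - 1) * (1 / μ s + 1 / μ t)) := by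
      rw [hobj Q, hobj Pstar, ← Finset.sum_sub_distrib,
        pairsum s t hst _ (fun x h1 h2 => by rw [hQx x h1 h2]; ring),
        hQs, hQt]
      simp only [hg, hc]
      have hμs := (hμ s).ne'
      have hμt := (hμ t).ne'
      field_simp
      ring
    linarith
  -- g is constant on Splus
  have gconst : ∀ s ∈ Splus, ∀ t ∈ Splus, g s = g t := by
    intro s hs t ht
    by_cases hst : s = t
    · rw [hst]
    · have h1 := perturb s hs t hst
      have h2 := perturb t ht s (Ne.symm hst)
      linarith
  intro s hs
  have hμsum : 0 < ∑ t ∈ Splus, μ t :=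
    Finset.sum_pos (fun t _ => hμ t) ⟨s, hs⟩
  -- closed form in terms of g s
  have hPform : ∀ t ∈ Splus, Pstar t * (2 * ((a:ℝ) - 1))
      = μ t * g s - (2 * (q t - μ t * L) + 1) := by
    intro t ht
    have hgt : g t = g s := (gconst t ht s hs)
    have hμt := (hμ t).ne'
    have h1 : 2 * ((a:ℝ) - 1) * Pstar t / μ t + c t = g s := by
      rw [← hgt, hg]
    rw [hc] at h1
    field_simp at h1
    linarith
  have hsumP : ∑ t ∈ Splus, Pstar t = 1 := by
    rw [← hPsum]
    refine Finset.sum_subset (Finset.subset_univ _) ?_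
    intro x _ hx
    have hnlt : ¬ 0 < Pstar x := fun h => hx ((hSplus x).mpr h)
    linarith [hP0 x]
  have hsum2 : 2 * ((a:ℝ) - 1)
      = (∑ t ∈ Splus, μ t) * g s - (2 * ∑ t ∈ Splus, (q t - μ t * L) + Splus.card) := by
    have := Finset.sum_congr rfl hPform
    rw [← Finset.sum_mul, hsumP] at this
    rw [Finset.sum_sub_distrib] at this
    simp only [Finset.sum_add_distrib, ← Finset.sum_mul, ← Finset.mul_sum] at this
    simp only [Finset.sum_const, nsmul_eq_mul, mul_one] at this
    linarith [this]
  have hgs : g s = -Λ₀ := by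
    have hsum3 : ∑ t ∈ Splus, (q t - μ t * L) = - ∑ t ∈ Splus, (μ t * L - q t) := by
      rw [← Finset.sum_neg_distrib]
      exact Finset.sum_congr rfl fun t _ => by ring
    rw [hsum3] at hsum2
    rw [hΛ₀, ← neg_div, eq_div_iff hμsum.ne']
    obtain ⟨K, hK⟩ : ∃ K : ℝ, g s = K := ⟨g s, rfl⟩
    rw [hK] at hsum2 ⊢
    linear_combination -hsum2
  -- finish
  have hμs := (hμ s).ne'
  have hform := hPform s hs
  rw [hgs] at hform
  rw [eq_div_iff (by positivity)]
  linarith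
end

section
/- Let S be a finite nonempty set, q : S → ℝ with q s ≥ 0, μ : S → ℝ with μ s > 0, L a real number, and a a natural number with a ≥ 2. Let O ⊆ S be nonempty and define Λ₀ = ( 2·∑_{s∈O} (μ s·L − q s) − |O| − 2(a−1) ) / ( ∑_{s∈O} μ s ). Define P : S → ℝ by P s = ( 2·(μ s·L − q s) − 1 − μ s·Λ₀ ) / ( 2(a−1) ) for s ∈ O and P s = 0 for s ∉ O. If P s ≥ 0 for all s ∈ O, and (2·q s + 1)/(μ s) ≥ 2L − Λ₀ for all s ∉ O, then ∑_{s∈S} P s = 1 (so P ∈ Δ) and f(P) ≤ f(Q) for every Q ∈ Δ; that is, P is a minimizer of f over the probability simplex. -/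
/-!
Each summand of `f` is a convex quadratic in its own coordinate, so it lies above its tangent
line at `P s`. By the choice of `Λ₀`, the slope of that tangent is exactly `-Λ₀` on `O`, and the
test off `O` says the slope at `P s = 0` is at least `-Λ₀`, where only `Q s ≥ 0` is allowed.
Hence `f(Q) - f(P) ≥ -Λ₀ (∑ Q - ∑ P) = 0`, and `Λ₀` is precisely the multiplier making `∑ P = 1`.
-/

open Finset

theorem quadratic_tangent_le {α : ℝ} (hα : 0 ≤ α) (β p x : ℝ) :
    α * p ^ 2 + β * p + (2 * α * p + β) * (x - p) ≤ α * x ^ 2 + β * x := by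
  have hgap : α * x ^ 2 + β * x - (α * p ^ 2 + β * p + (2 * α * p + β) * (x - p))
      = α * (x - p) ^ 2 := by ring
  linarith [mul_nonneg hα (sq_nonneg (x - p))]

/-- The one-dimensional KKT conditions for `x ↦ α x ^ 2 + β x` with multiplier `Λ`: stationarity
of the Lagrangian at `p`, or `p = 0` on the boundary of `x ≥ 0` with nonnegative reduced slope. -/
theorem quadratic_le_add_mul_sub_of_kkt {α β Λ p x : ℝ} (hα : 0 ≤ α)
    (hkkt : 2 * α * p + β = -Λ ∨ (p = 0 ∧ 0 ≤ x ∧ -Λ ≤ β)) :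
    α * p ^ 2 + β * p ≤ α * x ^ 2 + β * x + Λ * (x - p) := by
  have htangent := quadratic_tangent_le hα β p x
  rcases hkkt with hstationary | ⟨rfl, hx, hslope⟩
  · rw [hstationary] at htangent
    linarith
  · nlinarith [mul_nonneg hα (sq_nonneg x), mul_nonneg (neg_le_iff_add_nonneg.mp hslope) hx]

theorem sum_le_sum_of_le_add_mul_sub {ι : Type*} {s : Finset ι} {f g P Q : ι → ℝ} {Λ : ℝ}
    (h : ∀ i ∈ s, f i ≤ g i + Λ * (Q i - P i)) (hPQ : ∑ i ∈ s, P i = ∑ i ∈ s, Q i) :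
    ∑ i ∈ s, f i ≤ ∑ i ∈ s, g i :=
  calc ∑ i ∈ s, f i ≤ ∑ i ∈ s, (g i + Λ * (Q i - P i)) := sum_le_sum h
    _ = ∑ i ∈ s, g i := by
      rw [sum_add_distrib, ← mul_sum, sum_sub_distrib, hPQ, sub_self, mul_zero, add_zero]

theorem scdObjective_eq_sum {S : Type*} [Fintype S] (q μ : S → ℝ) (L : ℝ) (a : ℕ)
    (P : S → ℝ) :
    scdObjective q μ L a P =
      ∑ s, (((a : ℝ) - 1) / μ s * P s ^ 2 + (2 * (q s - μ s * L) + 1) / μ s * P s) := by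
  rw [scdObjective, mul_sum, ← sum_add_distrib]
  congr 1
  ext s
  ring

theorem sum_candidate_eq_one {S : Type*} [Fintype S] (q μ : S → ℝ) (L c Λ : ℝ) (hc : c ≠ 0)
    (O : Finset S) (hμO : ∑ s ∈ O, μ s ≠ 0)
    (hΛ : Λ = (2 * ∑ s ∈ O, (μ s * L - q s) - (O.card : ℝ) - 2 * c) / ∑ s ∈ O, μ s)
    (P : S → ℝ) (hPin : ∀ s ∈ O, P s = (2 * (μ s * L - q s) - 1 - μ s * Λ) / (2 * c))
    (hPout : ∀ s ∉ O, P s = 0) :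
    ∑ s, P s = 1 := by
  have hΛμ : Λ * ∑ s ∈ O, μ s = 2 * ∑ s ∈ O, (μ s * L - q s) - O.card - 2 * c := by
    rw [hΛ, div_mul_cancel₀ _ hμO]
  rw [← sum_subset (subset_univ O) fun s _ hs => hPout s hs, sum_congr rfl hPin, ← sum_div,
    div_eq_one_iff_eq (mul_ne_zero two_ne_zero hc)]
  rw [sum_sub_distrib, sum_sub_distrib, ← mul_sum, ← sum_mul, sum_const, nsmul_eq_mul, mul_one]
  linarith

theorem scd_kkt_sufficiency_general {S : Type*} [Fintype S]
    (q μ : S → ℝ) (hμ : ∀ s, 0 < μ s)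
    (L : ℝ) (a : ℕ) (ha : 2 ≤ a)
    (O : Finset S) (hO : O.Nonempty)
    (Λ₀ : ℝ)
    (hΛ₀ : Λ₀ = (2 * ∑ s ∈ O, (μ s * L - q s) - (O.card : ℝ)
                  - 2 * ((a : ℝ) - 1)) / ∑ s ∈ O, μ s)
    (P : S → ℝ)
    (hPin : ∀ s ∈ O,
      P s = (2 * (μ s * L - q s) - 1 - μ s * Λ₀) / (2 * ((a : ℝ) - 1)))
    (hPout : ∀ s ∉ O, P s = 0)
    (htest : ∀ s ∉ O, 2 * L - Λ₀ ≤ (2 * q s + 1) / μ s) :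
    (∑ s, P s = 1) ∧
    (∀ Q : S → ℝ, ((∀ s, 0 ≤ Q s) ∧ ∑ s, Q s = 1) →
      scdObjective q μ L a P ≤ scdObjective q μ L a Q) := by
  have ha1 : (0 : ℝ) < (a : ℝ) - 1 := by
    have : (2 : ℝ) ≤ a := by exact_mod_cast ha
    linarith
  have hsum : ∑ s, P s = 1 :=
    sum_candidate_eq_one q μ L _ Λ₀ ha1.ne' O (sum_pos (fun s _ => hμ s) hO).ne' hΛ₀ P hPin hPout
  refine ⟨hsum, fun Q ⟨hQ, hQsum⟩ => ?_⟩
  rw [scdObjective_eq_sum, scdObjective_eq_sum]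
  refine sum_le_sum_of_le_add_mul_sub (Λ := Λ₀) (fun s _ => ?_) (hsum.trans hQsum.symm)
  refine quadratic_le_add_mul_sub_of_kkt (div_nonneg ha1.le (hμ s).le) ?_
  have hμs := (hμ s).ne'
  by_cases hs : s ∈ O
  · left
    rw [hPin s hs]
    field_simp
    ring
  · right
    have hslope : (2 * (q s - μ s * L) + 1) / μ s = (2 * q s + 1) / μ s - 2 * L := by
      field_simp
      ring
    exact ⟨hPout s hs, hQ s, by linarith [htest s hs]⟩

/-- **KKT sufficiency of the candidate test in the SCD algorithm.**
Given a nonempty candidate set `O ⊆ S`, define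
`Λ₀ = (2 ∑_{s∈O} (μ s L − q s) − |O| − 2(a−1)) / (∑_{s∈O} μ s)` and
`P s = (2(μ s L − q s) − 1 − μ s Λ₀)/(2(a−1))` on `O`, and `P s = 0` off `O`.
If `P` is nonnegative on `O` and `(2 q s + 1)/μ s ≥ 2L − Λ₀` off `O`, then `P` lies in
the probability simplex and minimizes `f` over it. -/
theorem scd_kkt_sufficiency {S : Type*} [Fintype S] [Nonempty S]
    (q μ : S → ℝ) (hq : ∀ s, 0 ≤ q s) (hμ : ∀ s, 0 < μ s)
    (L : ℝ) (a : ℕ) (ha : 2 ≤ a)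
    (O : Finset S) (hO : O.Nonempty)
    (Λ₀ : ℝ)
    (hΛ₀ : Λ₀ = (2 * ∑ s ∈ O, (μ s * L - q s) - (O.card : ℝ)
                  - 2 * ((a : ℝ) - 1)) / ∑ s ∈ O, μ s)
    (P : S → ℝ)
    (hPin : ∀ s ∈ O,
      P s = (2 * (μ s * L - q s) - 1 - μ s * Λ₀) / (2 * ((a : ℝ) - 1)))
    (hPout : ∀ s ∉ O, P s = 0)
    (hPnonneg : ∀ s ∈ O, 0 ≤ P s)
    (htest : ∀ s ∉ O, 2 * L - Λ₀ ≤ (2 * q s + 1) / μ s) :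
    (∑ s, P s = 1) ∧
    (∀ Q : S → ℝ, ((∀ s, 0 ≤ Q s) ∧ ∑ s, Q s = 1) →
      scdObjective q μ L a P ≤ scdObjective q μ L a Q) :=
  scd_kkt_sufficiency_general q μ hμ L a ha O hO Λ₀ hΛ₀ P hPin hPout htest
end

section
/- Let S be a finite nonempty set, q : S → ℝ with q s ≥ 0, μ : S → ℝ with μ s > 0, L a real number, and a a natural number with a ≥ 2. Let O ⊆ S and Λ₀ ∈ ℝ be arbitrary, and define P : S → ℝ by P s = ( −2·(q s − μ s·L) − 1 − μ s·Λ₀ ) / ( 2(a−1) ) for s ∈ O and P s = 0 for s ∉ O. Then f(P) = Λ₀² · ( ∑_{s∈O} μ s ) / ( 4(a−1) ) − ∑_{s∈O} ( 2·(q s − μ s·L) + 1 )² / ( 4·μ s·(a−1) ). -/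
open Finset

/-- **Lemma 2: constant-time update of the objective value.**
For any candidate set `O` and any `Λ₀`, if
`P s = (−2(q s − μ s L) − 1 − μ s Λ₀)/(2(a−1))` on `O` and `P s = 0` off `O`, then
`f(P) = Λ₀² (∑_{s∈O} μ s)/(4(a−1)) − ∑_{s∈O} (2(q s − μ s L)+1)²/(4 μ s (a−1))`. -/
theorem scd_objective_closed_form {S : Type*} [Fintype S] [DecidableEq S] [Nonempty S]
    (q μ : S → ℝ) (hq : ∀ s, 0 ≤ q s) (hμ : ∀ s, 0 < μ s)
    (L : ℝ) (a : ℕ) (ha : 2 ≤ a)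
    (O : Finset S) (Λ₀ : ℝ) :
    scdObjective q μ L a
        (fun s => if s ∈ O then
            (-2 * (q s - μ s * L) - 1 - μ s * Λ₀) / (2 * ((a : ℝ) - 1))
          else 0)
      = Λ₀ ^ 2 * (∑ s ∈ O, μ s) / (4 * ((a : ℝ) - 1))
        - ∑ s ∈ O, (2 * (q s - μ s * L) + 1) ^ 2 / (4 * μ s * ((a : ℝ) - 1)) := by
  have h1 : ((a : ℝ) - 1) ≠ 0 := by
    have : (2 : ℝ) ≤ (a : ℝ) := by exact_mod_cast ha
    linarith
  unfold scdObjective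
  have key : ∀ g : S → ℝ,
      (∑ s, (if s ∈ O then g s else 0)) = ∑ s ∈ O, g s := by
    intro g
    rw [Finset.sum_ite_mem, Finset.univ_inter]
  simp only []
  rw [show (∑ s, (if s ∈ O then (-2 * (q s - μ s * L) - 1 - μ s * Λ₀) / (2 * ((a:ℝ) - 1)) else 0) ^ 2 / μ s)
      = ∑ s, (if s ∈ O then ((-2 * (q s - μ s * L) - 1 - μ s * Λ₀) / (2 * ((a:ℝ) - 1))) ^ 2 / μ s else 0) from
      Finset.sum_congr rfl (fun s _ => by split <;> simp),
    show (∑ s, (2 * (q s - μ s * L) + 1) / μ s * (if s ∈ O then (-2 * (q s - μ s * L) - 1 - μ s * Λ₀) / (2 * ((a:ℝ) - 1)) else 0))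
      = ∑ s, (if s ∈ O then (2 * (q s - μ s * L) + 1) / μ s * ((-2 * (q s - μ s * L) - 1 - μ s * Λ₀) / (2 * ((a:ℝ) - 1))) else 0) from
      Finset.sum_congr rfl (fun s _ => by split <;> simp),
    key, key,
    show (Λ₀ ^ 2 * ∑ s ∈ O, μ s) / (4 * ((a:ℝ) - 1)) = ∑ s ∈ O, Λ₀ ^ 2 * μ s / (4 * ((a:ℝ) - 1)) from by
      rw [Finset.mul_sum, Finset.sum_div],
    Finset.mul_sum,
    ← Finset.sum_add_distrib, ← Finset.sum_sub_distrib]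
  refine Finset.sum_congr rfl fun s _ => ?_
  have h2 : μ s ≠ 0 := (hμ s).ne'
  field_simp
  ring
end

section
/- Let S be a finite nonempty set, q : S → ℝ with q s ≥ 0, μ : S → ℝ with μ s > 0, L a real number, and a a natural number with a ≥ 1. Let P ∈ Δ be a minimizer of f over the probability simplex Δ. If s, s' ∈ S satisfy P s > 0, P s' > 0 and (P s)/(μ s) ≤ (P s')/(μ s'), then (q s + a)/(μ s) ≥ (q s')/(μ s'). -/
open Finset

lemma scd_aux_nonneg (A B p : ℝ) (hB0 : 0 ≤ B) (hp : 0 < p)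
    (key : ∀ ε : ℝ, 0 < ε → ε ≤ p → 0 ≤ A + B * ε) : 0 ≤ A := by
  by_contra hAneg
  push_neg at hAneg
  have hB1 : (0:ℝ) < 2 * (B + 1) := by linarith
  have hε1 : 0 < -A / (2 * (B + 1)) := div_pos (by linarith) hB1
  have hεpos : 0 < min p (-A / (2 * (B + 1))) := lt_min hp hε1
  have h2 := key _ hεpos (min_le_left _ _)
  have hεle2 : min p (-A / (2 * (B + 1))) ≤ -A / (2 * (B + 1)) := min_le_right _ _
  have hBε : B * min p (-A / (2 * (B + 1))) ≤ (B + 1) * (-A / (2 * (B + 1))) :=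
    mul_le_mul (by linarith) hεle2 (le_of_lt hεpos) (by linarith)
  have heq : (B + 1) * (-A / (2 * (B + 1))) = -A / 2 := by
    rw [mul_div_assoc']
    rw [div_eq_div_iff (ne_of_gt hB1) (by norm_num : (2:ℝ) ≠ 0)]
    ring
  rw [heq] at hBε
  linarith

/-- **Lemma 3 (preparation for majorization).**
If `P` minimizes `f` over the probability simplex and `s, s'` have positive
probability with `P s / μ s ≤ P s' / μ s'`, then
`(q s + a)/μ s ≥ q s' / μ s'`. -/
theorem scd_prepare_majorization {S : Type*} [Fintype S] [Nonempty S]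
    (q μ : S → ℝ) (hq : ∀ s, 0 ≤ q s) (hμ : ∀ s, 0 < μ s)
    (L : ℝ) (a : ℕ) (ha : 1 ≤ a)
    (P : S → ℝ)
    (hPΔ : (∀ s, 0 ≤ P s) ∧ ∑ s, P s = 1)
    (hPmin : ∀ Q : S → ℝ, ((∀ s, 0 ≤ Q s) ∧ ∑ s, Q s = 1) →
        scdObjective q μ L a P ≤ scdObjective q μ L a Q)
    (s s' : S) (hs : 0 < P s) (hs' : 0 < P s')
    (hratio : P s / μ s ≤ P s' / μ s') :
    q s' / μ s' ≤ (q s + (a : ℝ)) / μ s := by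
  have hμs := hμ s
  have hμs' := hμ s'
  have ha1 : (1 : ℝ) ≤ (a : ℝ) := by exact_mod_cast ha
  classical
  by_cases hne : s = s'
  · subst hne
    rw [div_le_div_iff₀ hμs' hμs']
    nlinarith
  -- main case: perturbation argument
  set A : ℝ := 2 * ((a:ℝ)-1) * (P s / μ s) - 2 * ((a:ℝ)-1) * (P s' / μ s')
      + (2 * (q s - μ s * L) + 1) / μ s - (2 * (q s' - μ s' * L) + 1) / μ s'
      with hA
  set B : ℝ := ((a:ℝ)-1) * (1 / μ s + 1 / μ s') with hB
  have key : ∀ ε : ℝ, 0 < ε → ε ≤ P s' → 0 ≤ A + B * ε := by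
    intro ε hε hεle
    set Q : S → ℝ := fun t =>
      P t + (if t = s then ε else 0) - (if t = s' then ε else 0) with hQ
    have hQ0 : ∀ t, 0 ≤ Q t := by
      intro t
      by_cases h1 : t = s
      · subst h1
        simp only [hQ, if_true, eq_self_iff_true, if_pos rfl, if_neg hne]
        linarith [hPΔ.1 t]
      · by_cases h2 : t = s'
        · subst h2
          simp only [hQ, if_true, eq_self_iff_true, if_neg h1, if_pos rfl]
          linarith
        · simp only [hQ, if_neg h1, if_neg h2]
          linarith [hPΔ.1 t]
    have hQsum : ∑ t, Q t = 1 := by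
      simp only [hQ]
      rw [Finset.sum_sub_distrib, Finset.sum_add_distrib,
        Finset.sum_ite_eq' Finset.univ s (fun _ => ε),
        Finset.sum_ite_eq' Finset.univ s' (fun _ => ε)]
      simp [hPΔ.2]
    have hle := hPmin Q ⟨hQ0, hQsum⟩
    have hsum1 : ∑ t, (Q t) ^ 2 / μ t
        = ∑ t, ((P t) ^ 2 / μ t
          + (if t = s then (2 * P s * ε + ε ^ 2) / μ s else 0)
          + (if t = s' then (-2 * P s' * ε + ε ^ 2) / μ s' else 0)) := by
      apply Finset.sum_congr rfl
      intro t _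
      by_cases h1 : t = s
      · subst h1
        simp only [hQ, if_true, eq_self_iff_true, if_pos rfl, if_neg hne]
        ring
      · by_cases h2 : t = s'
        · subst h2
          simp only [hQ, if_true, eq_self_iff_true, if_neg h1, if_pos rfl]
          ring
        · simp only [hQ, if_neg h1, if_neg h2]
          ring
    have hsum2 : ∑ t, ((2 * (q t - μ t * L) + 1) / μ t) * Q t
        = ∑ t, (((2 * (q t - μ t * L) + 1) / μ t) * P t
          + (if t = s then ((2 * (q s - μ s * L) + 1) / μ s) * ε else 0)
          + (if t = s' then -(((2 * (q s' - μ s' * L) + 1) / μ s') * ε) else 0)) := by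
      apply Finset.sum_congr rfl
      intro t _
      by_cases h1 : t = s
      · subst h1
        simp only [hQ, if_true, eq_self_iff_true, if_pos rfl, if_neg hne]
        ring
      · by_cases h2 : t = s'
        · subst h2
          simp only [hQ, if_true, eq_self_iff_true, if_neg h1, if_pos rfl]
          ring
        · simp only [hQ, if_neg h1, if_neg h2]
          ring
    have hobj : scdObjective q μ L a Q = scdObjective q μ L a P
        + ε * (A + B * ε) := by
      unfold scdObjective
      rw [hsum1, hsum2]
      rw [Finset.sum_add_distrib, Finset.sum_add_distrib,
        Finset.sum_add_distrib, Finset.sum_add_distrib,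
        Finset.sum_ite_eq' Finset.univ s, Finset.sum_ite_eq' Finset.univ s',
        Finset.sum_ite_eq' Finset.univ s, Finset.sum_ite_eq' Finset.univ s']
      simp only [Finset.mem_univ, if_pos]
      rw [hA, hB]
      ring
    rw [hobj] at hle
    have h0 : 0 ≤ ε * (A + B * ε) := by linarith
    nlinarith
  have hB0 : 0 ≤ B := by
    have h1 : 0 ≤ (a:ℝ) - 1 := by linarith
    have h2 : 0 < 1 / μ s + 1 / μ s' := by positivity
    rw [hB]; positivity
  have hA0 : 0 ≤ A := scd_aux_nonneg A B (P s') hB0 hs' key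
  -- from A ≥ 0, derive conclusion
  have hcs : (2 * (q s' - μ s' * L) + 1) / μ s' ≤ (2 * (q s - μ s * L) + 1) / μ s := by
    have h1 : 2 * ((a:ℝ)-1) * (P s / μ s) ≤ 2 * ((a:ℝ)-1) * (P s' / μ s') :=
      mul_le_mul_of_nonneg_left hratio (by linarith)
    rw [hA] at hA0
    linarith
  rw [div_le_div_iff₀ hμs' hμs]
  rw [div_le_div_iff₀ hμs' hμs] at hcs
  nlinarith [mul_pos hμs hμs', hq s, hq s']
end

section
/- Let S be a finite nonempty set, q : S → ℝ with q s ≥ 0, μ : S → ℝ with μ s > 0, L a real number, a a natural number with a ≥ 1, and let μ_min = min_{s∈S} μ s. Let P ∈ Δ be a minimizer of f over the probability simplex Δ. If s, s' ∈ S satisfy P s > 0, P s' > 0 and (P s')/(μ s') ≤ (P s)/(μ s), then (q s')/(μ s') + a/μ_min ≥ (q s)/(μ s). In particular, if the servers with positive probability are listed in nonincreasing order of (P s)/(μ s) as s₍₁₎, s₍₂₎, …, then for consecutive servers, (q s₍ᵢ₊₁₎)/(μ s₍ᵢ₊₁₎) + i·a/μ_min ≥ (q s₍ᵢ₎)/(μ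 s₍ᵢ₎) + (i−1)·a/μ_min. -/
open Finset

/-- **Normalized loads along the optimal probability ordering.**
If `P` minimizes `f` over the simplex and `P s, P s' > 0` with
`P s'/μ s' ≤ P s/μ s`, then `q s'/μ s' + a/μ_min ≥ q s/μ s`, where
`μ_min = min_s μ s`.  In particular, listing the positive-probability servers in
nonincreasing order of `P s/μ s` as `s₍₁₎, s₍₂₎, …` (here 0-indexed by an injective
`e : Fin k → S`), consecutive servers satisfy
`q s₍ᵢ₊₁₎/μ s₍ᵢ₊₁₎ + (i+1)·a/μ_min ≥ q s₍ᵢ₎/μ s₍ᵢ₎ + i·a/μ_min`. -/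
theorem scd_ordered_load_growth {S : Type*} [Fintype S] [Nonempty S]
    (q μ : S → ℝ) (hq : ∀ s, 0 ≤ q s) (hμ : ∀ s, 0 < μ s)
    (L : ℝ) (a : ℕ) (ha : 1 ≤ a)
    (μmin : ℝ) (hμmin : μmin = Finset.univ.inf' Finset.univ_nonempty μ)
    (P : S → ℝ)
    (hPΔ : (∀ s, 0 ≤ P s) ∧ ∑ s, P s = 1)
    (hPmin : ∀ Q : S → ℝ, ((∀ s, 0 ≤ Q s) ∧ ∑ s, Q s = 1) →
        scdObjective q μ L a P ≤ scdObjective q μ L a Q) :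
    (∀ s s' : S, 0 < P s → 0 < P s' → P s' / μ s' ≤ P s / μ s →
        q s / μ s ≤ q s' / μ s' + (a : ℝ) / μmin) ∧
    (∀ k : ℕ, ∀ e : Fin k → S, Function.Injective e →
      (∀ i, 0 < P (e i)) →
      Antitone (fun i => P (e i) / μ (e i)) →
      ∀ (i : ℕ) (h : i + 1 < k),
        q (e ⟨i, Nat.lt_of_succ_lt h⟩) / μ (e ⟨i, Nat.lt_of_succ_lt h⟩)
            + (i : ℝ) * (a : ℝ) / μmin
          ≤ q (e ⟨i + 1, h⟩) / μ (e ⟨i + 1, h⟩)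
            + ((i : ℝ) + 1) * (a : ℝ) / μmin) := by
  classical
  obtain ⟨hP0, hPsum⟩ := hPΔ
  have hμmin_pos : 0 < μmin := by
    rw [hμmin]; exact Finset.lt_inf'_iff Finset.univ_nonempty |>.mpr fun t _ => hμ t
  have hμmin_le : ∀ t, μmin ≤ μ t := by
    intro t; rw [hμmin]; exact Finset.inf'_le μ (Finset.mem_univ t)
  have ha1 : (1:ℝ) ≤ (a:ℝ) := by exact_mod_cast ha
  have hinv : ∀ t, 1 / μ t ≤ 1 / μmin := fun t =>
    one_div_le_one_div_of_le hμmin_pos (hμmin_le t)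
  have main : ∀ s s' : S, 0 < P s → 0 < P s' → P s' / μ s' ≤ P s / μ s →
      q s / μ s ≤ q s' / μ s' + (a : ℝ) / μmin := by
    intro s s' hs hs' hle
    by_cases hne : s = s'
    · subst hne
      have : 0 < (a:ℝ) / μmin := by positivity
      linarith
    · set ε : ℝ := min (P s) 1 with hεdef
      have hε0 : 0 < ε := lt_min hs one_pos
      have hεPs : ε ≤ P s := min_le_left _ _
      have hε1 : ε ≤ 1 := min_le_right _ _
      set Q : S → ℝ := fun t => if t = s then P s - ε else if t = s' then P s' + ε else P t
        with hQdef
      have hQs : Q s = P s - ε := by simp [hQdef]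
      have hQs' : Q s' = P s' + ε := by simp [hQdef, Ne.symm hne]
      have hmem' : s' ∈ Finset.univ.erase s := Finset.mem_erase.mpr ⟨Ne.symm hne, Finset.mem_univ s'⟩
      have hsplit : ∀ F : S → ℝ, ∑ t, F t =
          ∑ t ∈ (Finset.univ.erase s).erase s', F t + F s' + F s := by
        intro F
        rw [← Finset.sum_erase_add Finset.univ F (Finset.mem_univ s),
          ← Finset.sum_erase_add (Finset.univ.erase s) F hmem']
      have hQeq : ∀ t ∈ (Finset.univ.erase s).erase s', Q t = P t := by
        intro t ht
        rw [Finset.mem_erase, Finset.mem_erase] at ht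
        simp [hQdef, ht.1, ht.2.1]
      have hQ0 : ∀ t, 0 ≤ Q t := by
        intro t
        simp only [hQdef]
        split_ifs with h1 h2
        · linarith
        · linarith [hP0 s']
        · exact hP0 t
      have hQsum : ∑ t, Q t = 1 := by
        rw [hsplit Q, Finset.sum_congr rfl hQeq, hQs, hQs']
        have := hsplit P
        linarith
      have hopt := hPmin Q ⟨hQ0, hQsum⟩
      set A : ℝ := 2*((a:ℝ)-1)*(P s'/μ s' - P s/μ s)
          + (2*(q s' - μ s'*L)+1)/μ s' - (2*(q s - μ s*L)+1)/μ s with hAdef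
      set B : ℝ := ((a:ℝ)-1)*(1/μ s' + 1/μ s) with hBdef
      have e1 : ∑ t ∈ (Finset.univ.erase s).erase s', Q t ^ 2 / μ t
          = ∑ t ∈ (Finset.univ.erase s).erase s', P t ^ 2 / μ t :=
        Finset.sum_congr rfl fun t ht => by rw [hQeq t ht]
      have e2 : ∑ t ∈ (Finset.univ.erase s).erase s', (2 * (q t - μ t * L) + 1) / μ t * Q t
          = ∑ t ∈ (Finset.univ.erase s).erase s', (2 * (q t - μ t * L) + 1) / μ t * P t :=
        Finset.sum_congr rfl fun t ht => by rw [hQeq t ht]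
      have hobj : scdObjective q μ L a Q - scdObjective q μ L a P = ε * A + ε^2 * B := by
        simp only [scdObjective]
        rw [hsplit (fun t => Q t ^ 2 / μ t), hsplit (fun t => P t ^ 2 / μ t),
          hsplit (fun t => (2 * (q t - μ t * L) + 1) / μ t * Q t),
          hsplit (fun t => (2 * (q t - μ t * L) + 1) / μ t * P t),
          e1, e2, hQs, hQs', hAdef, hBdef]
        ring
      have hopt' : 0 ≤ ε * A + ε^2 * B := by linarith
      have hB0 : 0 ≤ B := by
        have h1 : 0 < 1 / μ s' := one_div_pos.mpr (hμ s')
        have h2 : 0 < 1 / μ s := one_div_pos.mpr (hμ s)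
        have h3 : (0:ℝ) ≤ (a:ℝ) - 1 := by linarith
        rw [hBdef]; nlinarith
      have h2 : 0 ≤ A + ε * B := by
        rcases le_or_gt 0 (A + ε * B) with h | h
        · exact h
        · exfalso; nlinarith [mul_neg_of_pos_of_neg hε0 h]
      have hεB : ε * B ≤ B := mul_le_of_le_one_left hB0 hε1
      have hexp : ∀ t : S, (2*(q t - μ t*L)+1)/μ t = 2*(q t/μ t) - 2*L + 1/μ t := by
        intro t
        have := (hμ t).ne'
        field_simp
      rw [hAdef, hexp s, hexp s'] at h2
      have p1 : 2*((a:ℝ)-1)*(P s'/μ s' - P s/μ s) ≤ 0 := by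
        have h1 : (0:ℝ) ≤ 2*((a:ℝ)-1) := by linarith
        have h2 : P s'/μ s' - P s/μ s ≤ 0 := by linarith
        exact mul_nonpos_of_nonneg_of_nonpos h1 h2
      have pB : B ≤ ((a:ℝ)-1) * (2/μmin) := by
        rw [hBdef]
        have hle2 : 1/μ s' + 1/μ s ≤ 2/μmin := by
          have := hinv s; have := hinv s'
          have : (2:ℝ)/μmin = 1/μmin + 1/μmin := by ring
          linarith [hinv s, hinv s']
        exact mul_le_mul_of_nonneg_left hle2 (by linarith)
      have hfin : ((a:ℝ)-1) * (2/μmin) = 2*((a:ℝ)/μmin) - 2*(1/μmin) := by ring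
      have h1m : 1/μ s' ≤ 1/μmin := hinv s'
      have h1s : 0 < 1/μ s := one_div_pos.mpr (hμ s)
      have h1min : 0 < 1/μmin := one_div_pos.mpr hμmin_pos
      linarith
  refine ⟨main, ?_⟩
  intro k e he hpos hanti i h
  have hij : (⟨i, Nat.lt_of_succ_lt h⟩ : Fin k) ≤ ⟨i+1, h⟩ := by
    simp [Fin.le_def]
  have hmono := hanti hij
  simp only at hmono
  have := main (e ⟨i, Nat.lt_of_succ_lt h⟩) (e ⟨i+1, h⟩)
    (hpos _) (hpos _) hmono
  have hr : ((i:ℝ)+1) * (a:ℝ) / μmin = (i:ℝ) * (a:ℝ) / μmin + (a:ℝ)/μmin := by ring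
  linarith
end

section
/- Let n ≥ 1 and let μ₁, …, μ_n be positive reals with μ_tot = ∑_{j=1}^n μ_j. Let p₁, …, p_n be nonnegative reals with ∑_{i=1}^n p_i = 1 such that the sequence p_i/μ_i is nonincreasing in i. Set w_i = μ_i/μ_tot. Then for every m with 1 ≤ m ≤ n, the suffix sums satisfy ∑_{i=m}^{n} p_i ≤ ∑_{i=m}^{n} w_i, with equality when m = 1. -/
open Finset

/-- **Suffix majorization of the probability vector by the rate-proportional vector
(Lemma 5).**  If `p` is a probability vector on `Fin n` with `p i / μ i` nonincreasing,
and `w i = μ i / μ_tot` is the rate-proportional vector, then every suffix sum of `p`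
is at most the corresponding suffix sum of `w`, with equality for the full sum. -/
theorem suffix_majorization {n : ℕ} (hn : 1 ≤ n)
    (μ : Fin n → ℝ) (hμ : ∀ i, 0 < μ i)
    (p : Fin n → ℝ) (hp0 : ∀ i, 0 ≤ p i) (hp1 : ∑ i, p i = 1)
    (hmono : Antitone (fun i => p i / μ i)) :
    (∀ m : Fin n, ∑ i ∈ Finset.Ici m, p i ≤
        ∑ i ∈ Finset.Ici m, μ i / (∑ j, μ j)) ∧
    (∑ i, p i = ∑ i, μ i / (∑ j, μ j)) := by
  have hne : (Finset.univ : Finset (Fin n)).Nonempty := ⟨⟨0, hn⟩, Finset.mem_univ _⟩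
  have hT : 0 < ∑ j, μ j := Finset.sum_pos (fun i _ => hμ i) hne
  constructor
  · intro m
    set t := p m / μ m with ht
    have ht0 : 0 ≤ t := div_nonneg (hp0 m) (hμ m).le
    have hA : 0 ≤ ∑ i ∈ Finset.Iio m, μ i := Finset.sum_nonneg fun i _ => (hμ i).le
    have hB : 0 < ∑ i ∈ Finset.Ici m, μ i :=
      Finset.sum_pos (fun i _ => hμ i) ⟨m, Finset.mem_Ici.mpr le_rfl⟩
    have h1 : ∑ i ∈ Finset.Ici m, p i ≤ t * ∑ i ∈ Finset.Ici m, μ i := by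
      rw [Finset.mul_sum]
      refine Finset.sum_le_sum fun i hi => ?_
      have h := hmono (Finset.mem_Ici.mp hi)
      calc p i = (p i / μ i) * μ i := (div_mul_cancel₀ (p i) (hμ i).ne').symm
        _ ≤ t * μ i := mul_le_mul_of_nonneg_right h (hμ i).le
    have h2 : t * ∑ i ∈ Finset.Iio m, μ i ≤ ∑ i ∈ Finset.Iio m, p i := by
      rw [Finset.mul_sum]
      refine Finset.sum_le_sum fun i hi => ?_
      have h := hmono (le_of_lt (Finset.mem_Iio.mp hi))
      calc t * μ i ≤ (p i / μ i) * μ i := mul_le_mul_of_nonneg_right h (hμ i).le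
        _ = p i := div_mul_cancel₀ (p i) (hμ i).ne'
    have hdisj : Disjoint (Finset.Iio m) (Finset.Ici m) :=
      Finset.disjoint_left.mpr fun i hi hj =>
        absurd (Finset.mem_Ici.mp hj) (not_le.mpr (Finset.mem_Iio.mp hi))
    have hunion : Finset.Iio m ∪ Finset.Ici m = Finset.univ := by
      ext i; simp [lt_or_ge i m]
    have hsplitp : ∑ i ∈ Finset.Iio m, p i + ∑ i ∈ Finset.Ici m, p i = 1 := by
      rw [← hp1, ← Finset.sum_union hdisj, hunion]
    have hsplitμ : ∑ i ∈ Finset.Iio m, μ i + ∑ i ∈ Finset.Ici m, μ i = ∑ j, μ j := by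
      rw [← Finset.sum_union hdisj, hunion]
    have k1 := mul_le_mul_of_nonneg_right h1 hA
    have k2 := mul_le_mul_of_nonneg_right h2 hB.le
    have keq : (t * ∑ i ∈ Finset.Ici m, μ i) * (∑ i ∈ Finset.Iio m, μ i)
        = (t * ∑ i ∈ Finset.Iio m, μ i) * (∑ i ∈ Finset.Ici m, μ i) := by ring
    have k3 : (∑ i ∈ Finset.Iio m, p i) * (∑ i ∈ Finset.Ici m, μ i)
        + (∑ i ∈ Finset.Ici m, p i) * (∑ i ∈ Finset.Ici m, μ i)
        = ∑ i ∈ Finset.Ici m, μ i := by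
      rw [← add_mul, hsplitp, one_mul]
    rw [← Finset.sum_div, le_div_iff₀ hT, ← hsplitμ, mul_add]
    linarith [k1, k2, keq, k3]
  · rw [← Finset.sum_div, hp1, eq_comm, div_eq_one_iff_eq hT.ne']
end
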